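/- For α = 1, the Riesz–Caputo derivative D^α f(x) defined with limits reduces to the classical derivative: formally, lim_{α→1⁻} D^α f(x) = f'(x) for f ∈ C¹([a,b]) with f' Hölder continuous, where D^α f(x) = (1/2)Γ(2-α)[ L_A^{α-1}·(1/Γ(1-α))∫_a^x f'(s)(x-s)^{-α} ds + L_B^{α-1}·(1/Γ(1-α))∫_x^b f'(s)(s-x)^{-α} ds ], L_A = x−a, L_B = b−x. -/

import Mathlib

/-!
Since `Γ(2 - α) = (1 - α) Γ(1 - α)`, each one-sided term of the Riesz–Caputo derivative equals
`(1 - α) / 2` times `L^(α-1) ∫ f'(s) |x - s|^(-α) ds`. Freezing `f'(s)` at `f'(x)` produces exactly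
`f'(x) / (1 - α)` on each side, and the Hölder bound `|f'(s) - f'(x)| ≤ C |s - x|^γ` keeps the
remainder below `C L^γ / (γ + 1 - α)`, which stays bounded as `α → 1`. Hence
`|D^α f(x) - f'(x)| = O(1 - α)`.
-/

open MeasureTheory intervalIntegral Set Filter Topology

/-- Riesz–Caputo fractional derivative of order `α` on `(a,b)` with
length scales `L_A = x - a`, `L_B = b - x`. -/
noncomputable def rieszCaputo (a b α : ℝ) (f : ℝ → ℝ) (x : ℝ) : ℝ :=
  (1 / 2) * Real.Gamma (2 - α) *
    ((x - a) ^ (α - 1) * ((1 / Real.Gamma (1 - α)) * ∫ s in a..x, deriv f s / (x - s) ^ α) +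
     (b - x) ^ (α - 1) * ((1 / Real.Gamma (1 - α)) * ∫ s in x..b, deriv f s / (s - x) ^ α))

lemma continuousOn_of_abs_sub_le_rpow {S : Set ℝ} {g : ℝ → ℝ} {C γ : ℝ} (hγ : 0 < γ)
    (hg : ∀ s ∈ S, ∀ t ∈ S, |g s - g t| ≤ C * |s - t| ^ γ) : ContinuousOn g S := by
  intro s hs
  have hbound : Tendsto (fun t => C * |t - s| ^ γ) (𝓝[S] s) (𝓝 0) := by
    have : ContinuousAt (fun t => C * |t - s| ^ γ) s := by fun_prop (disch := exact Or.inr hγ.le)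
    simpa [Real.zero_rpow hγ.ne'] using this.tendsto.mono_left nhdsWithin_le_nhds
  refine tendsto_iff_dist_tendsto_zero.2 <| squeeze_zero' (.of_forall fun _ => dist_nonneg) ?_ hbound
  filter_upwards [self_mem_nhdsWithin] with t ht using hg t ht s hs

lemma intervalIntegrable_sub_rpow (a x : ℝ) {p : ℝ} (hp : -1 < p) :
    IntervalIntegrable (fun s => (x - s) ^ p) volume a x := by
  simpa using (intervalIntegrable_rpow' (a := x - a) (b := 0) hp).comp_sub_left x

lemma integral_sub_rpow (a x : ℝ) {p : ℝ} (hp : -1 < p) :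
    ∫ s in a..x, (x - s) ^ p = (x - a) ^ (p + 1) / (p + 1) := by
  rw [integral_comp_sub_left (· ^ p), sub_self, integral_rpow (.inl hp),
    Real.zero_rpow (by linarith), sub_zero]

lemma abs_integral_mul_sub_rpow_neg_le {a x C γ α : ℝ} {h : ℝ → ℝ} (hax : a ≤ x)
    (hα : α < 1 + γ) (hh : ∀ s ∈ Icc a x, |h s| ≤ C * (x - s) ^ γ) :
    |∫ s in a..x, h s * (x - s) ^ (-α)| ≤ C * (x - a) ^ (γ + 1 - α) / (γ + 1 - α) := by
  have hp : -1 < γ - α := by linarith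
  calc |∫ s in a..x, h s * (x - s) ^ (-α)|
      ≤ ∫ s in a..x, C * (x - s) ^ (γ - α) := by
        rw [← Real.norm_eq_abs]
        refine norm_integral_le_of_norm_le hax ?_ ((intervalIntegrable_sub_rpow a x hp).const_mul C)
        filter_upwards [volume.ae_ne x] with s hsx hs
        have hxs : 0 < x - s := sub_pos.2 (lt_of_le_of_ne hs.2 hsx)
        rw [norm_mul, Real.norm_eq_abs, Real.norm_of_nonneg (Real.rpow_nonneg hxs.le _),
          sub_eq_add_neg γ, Real.rpow_add hxs, ← mul_assoc]
        exact mul_le_mul_of_nonneg_right (hh s (Ioc_subset_Icc_self hs)) (Real.rpow_nonneg hxs.le _)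
    _ = C * (x - a) ^ (γ + 1 - α) / (γ + 1 - α) := by
        rw [intervalIntegral.integral_const_mul, integral_sub_rpow a x hp, mul_div_assoc]
        ring_nf

lemma integral_div_sub_rpow_eq {a x α : ℝ} {g : ℝ → ℝ} (hax : a ≤ x) (hα : α < 1)
    (hg : ContinuousOn g (Icc a x)) :
    ∫ s in a..x, g s / (x - s) ^ α
      = (∫ s in a..x, (g s - g x) * (x - s) ^ (-α)) + g x * ((x - a) ^ (1 - α) / (1 - α)) := by
  have hp : -1 < -α := by linarith
  have hint := intervalIntegrable_sub_rpow a x hp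
  have hgx : ContinuousOn (fun s => g s - g x) (uIcc a x) :=
    uIcc_of_le hax ▸ hg.sub continuousOn_const
  calc ∫ s in a..x, g s / (x - s) ^ α
      = ∫ s in a..x, ((g s - g x) * (x - s) ^ (-α) + g x * (x - s) ^ (-α)) := by
        refine integral_congr fun s hs => ?_
        rw [Real.rpow_neg (sub_nonneg.2 (uIcc_of_le hax ▸ hs).2)]
        ring
    _ = _ := by
        rw [integral_add (hint.continuousOn_mul hgx) (hint.const_mul _),
          intervalIntegral.integral_const_mul, integral_sub_rpow a x hp, neg_add_eq_sub]

lemma abs_rpow_mul_integral_div_sub_rpow_sub_le {a x C γ α : ℝ} {g : ℝ → ℝ} (hax : a < x)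
    (hα : α < 1) (hγ : 0 ≤ γ) (hg : ContinuousOn g (Icc a x))
    (hH : ∀ s ∈ Icc a x, |g s - g x| ≤ C * (x - s) ^ γ) :
    |(x - a) ^ (α - 1) * (∫ s in a..x, g s / (x - s) ^ α) - g x / (1 - α)|
      ≤ C * (x - a) ^ γ / (γ + 1 - α) := by
  have hL : 0 < x - a := sub_pos.2 hax
  have hcancel : (x - a) ^ (α - 1) * (x - a) ^ (1 - α) = 1 := by
    rw [← Real.rpow_add hL, sub_add_sub_cancel', sub_self, Real.rpow_zero]
  have hrem : (x - a) ^ (α - 1) * (x - a) ^ (γ + 1 - α) = (x - a) ^ γ := by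
    rw [← Real.rpow_add hL]; ring_nf
  have hsplit : (x - a) ^ (α - 1) * (∫ s in a..x, g s / (x - s) ^ α) - g x / (1 - α)
      = (x - a) ^ (α - 1) * ∫ s in a..x, (g s - g x) * (x - s) ^ (-α) := by
    rw [integral_div_sub_rpow_eq hax.le hα hg]
    linear_combination (g x / (1 - α)) * hcancel
  calc |(x - a) ^ (α - 1) * (∫ s in a..x, g s / (x - s) ^ α) - g x / (1 - α)|
      = (x - a) ^ (α - 1) * |∫ s in a..x, (g s - g x) * (x - s) ^ (-α)| := by
        rw [hsplit, abs_mul, abs_of_pos (Real.rpow_pos_of_pos hL _)]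
    _ ≤ (x - a) ^ (α - 1) * (C * (x - a) ^ (γ + 1 - α) / (γ + 1 - α)) := by
        gcongr
        exact abs_integral_mul_sub_rpow_neg_le hax.le (by linarith) hH
    _ = C * (x - a) ^ γ / (γ + 1 - α) := by
        rw [← hrem]; ring

lemma abs_rpow_mul_integral_div_rpow_sub_sub_le {x b C γ α : ℝ} {g : ℝ → ℝ} (hxb : x < b)
    (hα : α < 1) (hγ : 0 ≤ γ) (hg : ContinuousOn g (Icc x b))
    (hH : ∀ s ∈ Icc x b, |g s - g x| ≤ C * (s - x) ^ γ) :
    |(b - x) ^ (α - 1) * (∫ s in x..b, g s / (s - x) ^ α) - g x / (1 - α)|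
      ≤ C * (b - x) ^ γ / (γ + 1 - α) := by
  have hneg : MapsTo Neg.neg (Icc (-b) (-x)) (Icc x b) := fun s hs =>
    ⟨le_neg.1 hs.2, neg_le.1 hs.1⟩
  have h := abs_rpow_mul_integral_div_sub_rpow_sub_le (g := fun s => g (-s)) (neg_lt_neg hxb) hα hγ
    (hg.comp continuousOn_neg hneg) fun s hs => by
      rw [neg_neg, neg_sub_comm]; exact hH (-s) (hneg hs)
  have hflip : ∫ s in -b..-x, g (-s) / (-x - s) ^ α = ∫ s in x..b, g s / (s - x) ^ α := by
    simp_rw [neg_sub_comm x]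
    simpa only [neg_neg] using integral_comp_neg (a := -b) (b := -x) fun s => g s / (s - x) ^ α
  rwa [hflip, neg_sub_neg, neg_neg] at h

lemma rieszCaputo_sub_eq (a b x c : ℝ) (f : ℝ → ℝ) {α : ℝ} (hα : α < 1) :
    rieszCaputo a b α f x - c = (1 - α) / 2 *
      (((x - a) ^ (α - 1) * (∫ s in a..x, deriv f s / (x - s) ^ α) - c / (1 - α)) +
        ((b - x) ^ (α - 1) * (∫ s in x..b, deriv f s / (s - x) ^ α) - c / (1 - α))) := by
  have h1α : 0 < 1 - α := sub_pos.2 hα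
  have hΓ : Real.Gamma (2 - α) = (1 - α) * Real.Gamma (1 - α) := by
    rw [← Real.Gamma_add_one h1α.ne']; ring_nf
  rw [rieszCaputo, hΓ]
  field_simp [(Real.Gamma_pos_of_pos h1α).ne']
  ring

lemma abs_rieszCaputo_sub_deriv_le {a b x C γ α : ℝ} {f : ℝ → ℝ} (hax : a < x) (hxb : x < b)
    (hα : α < 1) (hγ : 0 < γ)
    (hH : ∀ s ∈ Icc a b, ∀ t ∈ Icc a b, |deriv f s - deriv f t| ≤ C * |s - t| ^ γ) :
    |rieszCaputo a b α f x - deriv f x|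
      ≤ (1 - α) / 2 * (C * (x - a) ^ γ / (γ + 1 - α) + C * (b - x) ^ γ / (γ + 1 - α)) := by
  have hcont := continuousOn_of_abs_sub_le_rpow hγ hH
  have hx : x ∈ Icc a b := ⟨hax.le, hxb.le⟩
  have hleft := abs_rpow_mul_integral_div_sub_rpow_sub_le hax hα hγ.le
    (hcont.mono (Icc_subset_Icc_right hxb.le)) fun s hs => by
      simpa [abs_of_nonpos (sub_nonpos.2 hs.2)] using hH s ⟨hs.1, hs.2.trans hxb.le⟩ x hx
  have hright := abs_rpow_mul_integral_div_rpow_sub_sub_le hxb hα hγ.le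
    (hcont.mono (Icc_subset_Icc_left hax.le)) fun s hs => by
      simpa [abs_of_nonneg (sub_nonneg.2 hs.1)] using hH s ⟨hax.le.trans hs.1, hs.2⟩ x hx
  rw [rieszCaputo_sub_eq a b x _ f hα, abs_mul, abs_of_pos (by linarith)]
  gcongr
  exact (abs_add_le _ _).trans (add_le_add hleft hright)

theorem rieszCaputo_tendsto_deriv_general (a b x : ℝ) (f : ℝ → ℝ)
    (hax : a < x) (hxb : x < b)
    (hHolder : ∃ C γ : ℝ, 0 < γ ∧
      ∀ s ∈ Set.Icc a b, ∀ t ∈ Set.Icc a b,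
        |deriv f s - deriv f t| ≤ C * |s - t| ^ γ) :
    Tendsto (fun α => rieszCaputo a b α f x) (nhdsWithin 1 (Set.Iio 1))
      (nhds (deriv f x)) := by
  obtain ⟨C, γ, hγ, hH⟩ := hHolder
  have hbound : Tendsto (fun α => (1 - α) / 2 * (C * (x - a) ^ γ / (γ + 1 - α)
      + C * (b - x) ^ γ / (γ + 1 - α))) (𝓝[<] 1) (𝓝 0) := by
    have : ContinuousAt (fun α => (1 - α) / 2 * (C * (x - a) ^ γ / (γ + 1 - α)
        + C * (b - x) ^ γ / (γ + 1 - α))) 1 := by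
      fun_prop (disch := simp [hγ.ne'])
    simpa using this.tendsto.mono_left nhdsWithin_le_nhds
  refine tendsto_iff_dist_tendsto_zero.2 <| squeeze_zero' (.of_forall fun _ => dist_nonneg) ?_ hbound
  filter_upwards [self_mem_nhdsWithin] with α hα
    using abs_rieszCaputo_sub_deriv_le hax hxb hα hγ hH

/-- As `α → 1⁻`, the Riesz–Caputo derivative recovers the classical derivative. -/
theorem rieszCaputo_tendsto_deriv (a b x : ℝ) (f : ℝ → ℝ)
    (hax : a < x) (hxb : x < b)
    (hf : ContDiffOn ℝ 1 f (Set.Icc a b))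
    (hHolder : ∃ C γ : ℝ, 0 < γ ∧
      ∀ s ∈ Set.Icc a b, ∀ t ∈ Set.Icc a b,
        |deriv f s - deriv f t| ≤ C * |s - t| ^ γ) :
    Tendsto (fun α => rieszCaputo a b α f x) (nhdsWithin 1 (Set.Iio 1))
      (nhds (deriv f x)) :=
  rieszCaputo_tendsto_deriv_general a b x f hax hxb hHolder
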